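/- With the notation of the first-order eigenvector truncation, let instead p̃ = Q^{(m)}(Δ^{(m)})^{-1}(Q^{(m)})^T v + (1/(μ−t) + μ/(μ−t)²) r − (1/(μ−t)²) A r with r = v − Q^{(m)}(Q^{(m)})^T v. Then ‖p − p̃‖² = Σ_{k=m+1}^n ((μ − λ_k)² ⟨q_k, v⟩ / ((μ − t)²(λ_k − t)))², and hence ‖p − p̃‖ ≤ max_{m+1≤k≤n}(λ_k − μ)² / ((μ − t)² · min_{m+1≤k≤n}|λ_k − t|). -/

import Mathlib

/-!
In the eigenbasis, i.e. in the coordinates `w = Qᵀ v`, every vector in sight is `Q` applied to an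
explicit coefficient vector, and `A` acts on coefficients by multiplication with the eigenvalues.
The `k`-th coefficient of `p - p̃` vanishes for `k < m`; for `k ≥ m` it is `w k` times the
remainder of the first-order Taylor expansion of `1 / (λ - t)` at `λ = μ`, namely
`(μ - λ_k)² / ((μ - t)² (λ_k - t))`. As `Q` is orthogonal, `‖p - p̃‖²` is the sum of the squares
of these coefficients; bounding each factor by the maximum, resp. minimum, and using
`∑ w_k² = ‖v‖² = 1` gives the estimate.
-/

open Matrix

namespace Matrix

variable {ι κ R : Type*} [Fintype ι]

theorem sum_mulVec_sq_of_transpose_mul_eq_one [CommSemiring R] [Fintype κ] [DecidableEq ι]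
    {Q : Matrix κ ι R} (hQ : Qᵀ * Q = 1) (x : ι → R) :
    ∑ i, (Q *ᵥ x) i ^ 2 = ∑ k, x k ^ 2 := by
  have h : Q *ᵥ x ⬝ᵥ Q *ᵥ x = x ⬝ᵥ x := by
    rw [dotProduct_mulVec, ← mulVec_transpose, mulVec_mulVec, hQ, one_mulVec]
  simpa only [dotProduct, sq] using h

theorem sum_filter_smul_transpose [CommSemiring R] (Q : Matrix κ ι R) (p : ι → Prop)
    [DecidablePred p] (c : ι → R) :
    ∑ k ∈ Finset.univ.filter p, c k • Qᵀ k = Q *ᵥ fun k => if p k then c k else 0 := by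
  rw [mulVec_eq_sum, Finset.sum_filter]
  refine Finset.sum_congr rfl fun k _ => ?_
  split_ifs <;> simp

theorem mul_diagonal_mul_transpose_mulVec_mulVec [CommSemiring R] [Fintype κ] [DecidableEq ι]
    {Q : Matrix κ ι R} (hQ : Qᵀ * Q = 1) (d c : ι → R) :
    (Q * diagonal d * Qᵀ) *ᵥ (Q *ᵥ c) = Q *ᵥ (d * c) := by
  rw [mulVec_mulVec, Matrix.mul_assoc, Matrix.mul_assoc, hQ, Matrix.mul_one, ← mulVec_mulVec]
  congr 1
  funext k
  exact mulVec_diagonal d c k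

end Matrix

/-- `1 / (μ - t) + μ / (μ - t) ^ 2 - a / (μ - t) ^ 2` is the first-order Taylor polynomial of
`1 / (a - t)` at `a = μ`; the right-hand side is the exact remainder. -/
theorem div_sub_first_order_taylor {a t μ : ℝ} (ha : a ≠ t) (hμ : μ ≠ t) (w : ℝ) :
    w / (a - t) - ((1 / (μ - t) + μ / (μ - t) ^ 2) * w - 1 / (μ - t) ^ 2 * (a * w)) =
      (μ - a) ^ 2 * w / ((μ - t) ^ 2 * (a - t)) := by
  have ha' : a - t ≠ 0 := sub_ne_zero.mpr ha
  have hμ' : μ - t ≠ 0 := sub_ne_zero.mpr hμ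
  field_simp
  ring

theorem sqrt_sum_sq_le_of_abs_le_mul {ι : Type*} {s : Finset ι} {g w : ι → ℝ} {B : ℝ}
    (hB : 0 ≤ B) (hg : ∀ k ∈ s, |g k| ≤ B * |w k|) (hw : ∑ k ∈ s, w k ^ 2 ≤ 1) :
    √(∑ k ∈ s, g k ^ 2) ≤ B := by
  rw [Real.sqrt_le_left hB]
  calc ∑ k ∈ s, g k ^ 2 ≤ ∑ k ∈ s, B ^ 2 * w k ^ 2 := by
        refine Finset.sum_le_sum fun k hk => ?_
        rw [← mul_pow, sq_le_sq, abs_mul, abs_of_nonneg hB]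
        exact hg k hk
    _ = B ^ 2 * ∑ k ∈ s, w k ^ 2 := (Finset.mul_sum ..).symm
    _ ≤ B ^ 2 := mul_le_of_le_one_right (sq_nonneg B) hw

theorem sqrt_sum_sq_le_sup'_div_inf' {ι : Type*} {s : Finset ι} (hs : s.Nonempty)
    {a b w : ι → ℝ} {c : ℝ} (ha : ∀ k ∈ s, 0 ≤ a k) (hb : ∀ k ∈ s, b k ≠ 0) (hc : 0 < c)
    (hw : ∑ k ∈ s, w k ^ 2 ≤ 1) :
    √(∑ k ∈ s, (a k * w k / (c * b k)) ^ 2) ≤ s.sup' hs a / (c * s.inf' hs fun k => |b k|) := by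
  obtain ⟨k₀, hk₀⟩ := id hs
  have hI : 0 < s.inf' hs fun k => |b k| :=
    (Finset.lt_inf'_iff _).mpr fun k hk => abs_pos.mpr (hb k hk)
  have hM : 0 ≤ s.sup' hs a := (ha k₀ hk₀).trans (Finset.le_sup' a hk₀)
  refine sqrt_sum_sq_le_of_abs_le_mul (by positivity) (fun k hk => ?_) hw
  rw [abs_div, abs_mul, abs_mul, abs_of_nonneg (ha k hk), abs_of_pos hc, div_mul_eq_mul_div]
  exact div_le_div₀ (by positivity) (mul_le_mul_of_nonneg_right (Finset.le_sup' a hk)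
    (abs_nonneg _)) (by positivity) (mul_le_mul_of_nonneg_left (Finset.inf'_le _ hk) hc.le)

/-- exact error of the second-order truncated eigenvector formula
and the resulting bound. -/
theorem second_order_eigenvector_error
    (n m : ℕ) (hm : m < n)
    (A Q : Matrix (Fin n) (Fin n) ℝ) (d : Fin n → ℝ)
    (hQ : Qᵀ * Q = 1)
    (hA : A = Q * Matrix.diagonal d * Qᵀ)
    (q : Fin n → Fin n → ℝ) (hq : ∀ i j, q i j = Q j i)
    (v : Fin n → ℝ) (hv : Real.sqrt (∑ i, v i ^ 2) = 1)
    (t μ : ℝ) (ht : ∀ k, t ≠ d k) (htμ : t ≠ μ)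
    (r : Fin n → ℝ)
    (hr : r = v - ∑ i ∈ Finset.univ.filter (fun i : Fin n => (i : ℕ) < m),
      (q i ⬝ᵥ v) • q i)
    (p : Fin n → ℝ)
    (hp : p = Q *ᵥ (fun k => (q k ⬝ᵥ v) / (d k - t)))
    (pt : Fin n → ℝ)
    (hpt : pt = (∑ k ∈ Finset.univ.filter (fun k : Fin n => (k : ℕ) < m),
        ((q k ⬝ᵥ v) / (d k - t)) • q k)
      + (1 / (μ - t) + μ / (μ - t) ^ 2) • r
      - (1 / (μ - t) ^ 2) • (A *ᵥ r)) :
    (∑ i, (p i - pt i) ^ 2 =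
      ∑ k ∈ Finset.univ.filter (fun k : Fin n => m ≤ (k : ℕ)),
        ((μ - d k) ^ 2 * (q k ⬝ᵥ v) / ((μ - t) ^ 2 * (d k - t))) ^ 2) ∧
    Real.sqrt (∑ i, (p i - pt i) ^ 2) ≤
      ((Finset.univ.filter (fun k : Fin n => m ≤ (k : ℕ))).sup'
          ⟨⟨m, hm⟩, by simp⟩ (fun k => (d k - μ) ^ 2)) /
        ((μ - t) ^ 2 *
          (Finset.univ.filter (fun k : Fin n => m ≤ (k : ℕ))).inf'
            ⟨⟨m, hm⟩, by simp⟩ (fun k => |d k - t|)) := by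
  obtain rfl : q = Qᵀ := funext fun i => funext (hq i)
  set w := Qᵀ *ᵥ v with hw
  have hwk : ∀ k, Qᵀ k ⬝ᵥ v = w k := fun k => rfl
  simp only [hwk] at hp hr hpt ⊢
  have hvw : v = Q *ᵥ w := by rw [hw, mulVec_mulVec, mul_eq_one_comm.mp hQ, one_mulVec]
  have hrw : r = Q *ᵥ fun k => if m ≤ (k : ℕ) then w k else 0 := by
    rw [hr, sum_filter_smul_transpose, hvw, ← mulVec_sub]
    congr 1
    funext k
    by_cases hk : m ≤ (k : ℕ) <;> simp [hk, not_le.mp]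
  have herr : p - pt = Q *ᵥ fun k =>
      if m ≤ (k : ℕ) then (μ - d k) ^ 2 * w k / ((μ - t) ^ 2 * (d k - t)) else 0 := by
    rw [hp, hpt, hrw, hA, mul_diagonal_mul_transpose_mulVec_mulVec hQ, sum_filter_smul_transpose,
      ← mulVec_smul, ← mulVec_smul, ← mulVec_add, ← mulVec_sub, ← mulVec_sub]
    congr 1
    funext k
    by_cases hk : m ≤ (k : ℕ)
    · simpa [hk, not_lt.mpr hk] using div_sub_first_order_taylor (ht k).symm htμ.symm (w k)
    · simp [hk, not_le.mp]
  have hsum : ∑ i, (p i - pt i) ^ 2 = ∑ k ∈ Finset.univ.filter (fun k : Fin n => m ≤ (k : ℕ)),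
      ((μ - d k) ^ 2 * w k / ((μ - t) ^ 2 * (d k - t))) ^ 2 := by
    change ∑ i, (p - pt) i ^ 2 = _
    rw [herr, sum_mulVec_sq_of_transpose_mul_eq_one hQ, Finset.sum_filter]
    simp [ite_pow]
  refine ⟨hsum, ?_⟩
  rw [hsum]
  simp_rw [sub_sq_comm μ]
  refine sqrt_sum_sq_le_sup'_div_inf' _ (fun k _ => sq_nonneg _)
    (fun k _ => sub_ne_zero.mpr (ht k).symm) (by positivity) ?_
  calc ∑ k ∈ Finset.univ.filter (fun k : Fin n => m ≤ (k : ℕ)), w k ^ 2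
      ≤ ∑ k, w k ^ 2 := Finset.sum_le_univ_sum_of_nonneg fun k => sq_nonneg _
    _ = ∑ i, v i ^ 2 := by rw [hvw, sum_mulVec_sq_of_transpose_mul_eq_one hQ]
    _ = 1 := Real.sqrt_eq_one.mp hv
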